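/- Let e ≥ 1 and let a,b ∈ ℕ with 0 ≤ a ≤ q-1 and b - ea ≥ 0. Let α_1,…,α_q enumerate F_q, and let C_{A,e}(a,b) = Σ_{d=0}^{a} span{(α_1^d,…,α_q^d)} ⊗ RS_q(b - ed + 1) ⊆ F_q^{q^2}. Set s_A = (b+1-q)/e and s̃_A = min{⌊s_A⌋, a} if s_A ≥ 0, and s̃_A = -1 otherwise. Then dim C_{A,e}(a,b) = (s̃_A + 1)q + (a - s̃_A)(b + 1 - e(a + s̃_A + 1)/2). -/

import Mathlib

/-!
The monomials `x ↦ x ^ d` with `d < q` are linearly independent functions on `F`, since a nonzero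
polynomial of degree `< q` cannot vanish at all `q` points. Hence the summands
`(x ^ d) ⊗ RS_q(b - ed + 1)`, `d ≤ a < q`, of `C_{𝔸,e}(a,b)` are independent, and
`dim C_{𝔸,e}(a,b) = ∑_{d ≤ a} min (b - ed + 1, q)`. The minimum is `q` exactly for `d ≤ s̃_A`; the
remaining terms form an arithmetic progression, and summing gives the formula.
-/

/-- The affine Reed–Solomon code `RS_q(k)`: evaluations of polynomials of degree `< k` at
all elements of `F`.  By convention it is `{0}` for `k ≤ 0` and the full space for `k ≥ q`. -/
noncomputable def RS (F : Type*) [Field F] (k : ℤ) : Submodule F (F → F) :=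
  (Polynomial.degreeLT F k.toNat).map
    (LinearMap.pi fun α : F => (Polynomial.aeval α).toLinearMap)

/-- The linear map `c ↦ v ⊗ c`, sending a word `c` to the matrix `(v i * c j)_{i,j}`. -/
noncomputable def vTensor (F : Type*) [Field F] {ι₁ ι₂ : Type*} (v : ι₁ → F) :
    (ι₂ → F) →ₗ[F] (ι₁ → ι₂ → F) where
  toFun c := fun i j => v i * c j
  map_add' c d := by funext i j; simp [mul_add]
  map_smul' a c := by funext i j; simp only [Pi.smul_apply, smul_eq_mul, RingHom.id_apply]; ring

/-- The code `C_{𝔸,e}(a,b) = Σ_{d=0}^{a} ⟨(α^d)_α⟩ ⊗ RS_q(b - ed + 1) ⊆ F^{q²}`,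
the evaluation code on the affine chart of the Hirzebruch surface `H_e`.  A codeword is a
matrix indexed by `F × F`, the entry at `(α, β)` being `α^d · f(β)`. -/
noncomputable def CA (F : Type*) [Field F] (e a b : ℕ) : Submodule F (F → F → F) :=
  ⨆ d ∈ Finset.Iic a, (RS F ((b : ℤ) - e * d + 1)).map (vTensor F fun α : F => α ^ d)

open Polynomial Module

noncomputable def polyEval (F : Type*) [Field F] : F[X] →ₗ[F] (F → F) :=
  LinearMap.pi fun α : F => (aeval α).toLinearMap

section Evaluation

variable {F : Type*} [Field F] [Fintype F]

theorem disjoint_degreeLT_ker_polyEval :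
    Disjoint (degreeLT F (Fintype.card F)) (LinearMap.ker (polyEval F)) := by
  rw [Submodule.disjoint_def]
  intro p hp hker
  refine eq_zero_of_degree_lt_of_eval_finset_eq_zero Finset.univ
    (by simpa using mem_degreeLT.mp hp) fun α _ => ?_
  simpa [polyEval] using congrFun (LinearMap.mem_ker.mp hker) α

theorem linearIndepOn_pow_Iio_card :
    LinearIndepOn F (fun (d : ℕ) (α : F) => α ^ d) (Set.Iio (Fintype.card F)) := by
  have hX : LinearIndepOn F (fun d : ℕ => (X : F[X]) ^ d) (Set.Iio (Fintype.card F)) := by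
    simpa [LinearIndepOn, coe_basisMonomials, monomial_one_right_eq_X_pow] using
      ((basisMonomials F).linearIndependent.linearIndepOn (s := Set.Iio (Fintype.card F)))
  have hspan : Submodule.span F ((fun d : ℕ => (X : F[X]) ^ d) '' Set.Iio (Fintype.card F)) ≤
      degreeLT F (Fintype.card F) := by
    rw [Submodule.span_le]
    rintro _ ⟨d, hd, rfl⟩
    exact mem_degreeLT.mpr ((degree_X_pow_le d).trans_lt (by exact_mod_cast hd))
  convert hX.map_injOn (polyEval F)
    (LinearMap.injOn_of_disjoint_ker hspan disjoint_degreeLT_ker_polyEval) using 1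
  ext d α
  simp [polyEval]

theorem finrank_map_polyEval_degreeLT (n : ℕ) :
    finrank F ((degreeLT F n).map (polyEval F)) = min n (Fintype.card F) := by
  have hsmall : ∀ m ≤ Fintype.card F, finrank F ((degreeLT F m).map (polyEval F)) = m := by
    intro m hm
    have hinj : Function.Injective ((polyEval F).domRestrict (degreeLT F m)) := by
      rw [LinearMap.injective_domRestrict_iff]
      exact disjoint_degreeLT_ker_polyEval.mono_left (degreeLT_mono hm)
    rw [← LinearMap.range_domRestrict, LinearMap.finrank_range_of_inj hinj,
      (degreeLTEquiv F m).finrank_eq, finrank_fin_fun]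
  rcases le_total n (Fintype.card F) with hn | hn
  · rw [min_eq_left hn, hsmall n hn]
  · have htop : (degreeLT F (Fintype.card F)).map (polyEval F) = ⊤ :=
      Submodule.eq_top_of_finrank_eq (by rw [hsmall _ le_rfl, finrank_fintype_fun_eq_card])
    rw [min_eq_right hn, eq_top_mono (Submodule.map_mono (degreeLT_mono hn)) htop, finrank_top,
      finrank_fintype_fun_eq_card]

end Evaluation

section Tensor

variable {K X Y ι : Type*} [Field K]

theorem eq_zero_of_sum_vTensor_eq_zero [Fintype ι] {v : ι → X → K} (hv : LinearIndependent K v)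
    {c : ι → Y → K} (h : ∑ i, vTensor K (v i) (c i) = 0) : c = 0 := by
  funext i y
  have hy : ∑ j, c j y • v j = 0 := by
    funext x
    simpa [vTensor, mul_comm] using congrFun (congrFun h x) y
  exact Fintype.linearIndependent_iff.mp hv _ hy i

theorem finrank_iSup_map_vTensor [Finite Y] (s : Finset ι) {v : ι → X → K}
    (hv : LinearIndepOn K v s) (p : ι → Submodule K (Y → K)) :
    finrank K ↥(⨆ i ∈ s, (p i).map (vTensor K (v i))) = ∑ i ∈ s, finrank K (p i) := by
  classical
  let Ψ : ((i : s) → p i) →ₗ[K] (X → Y → K) :=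
    ∑ i : s, (vTensor K (v i)).comp ((p i).subtype.comp (LinearMap.proj i))
  have hΨ : ∀ c, Ψ c = ∑ i : s, vTensor K (v i) (c i) := fun c => by simp [Ψ]
  have hinj : Function.Injective Ψ := by
    rw [← LinearMap.ker_eq_bot, LinearMap.ker_eq_bot']
    intro c hc
    have := eq_zero_of_sum_vTensor_eq_zero hv (c := fun i => (c i : Y → K)) ((hΨ c).symm.trans hc)
    funext i
    exact Subtype.ext (congrFun this i)
  have hrange : LinearMap.range Ψ = ⨆ i ∈ s, (p i).map (vTensor K (v i)) := by
    rw [iSup_subtype']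
    refine le_antisymm ?_ (iSup_le fun i => ?_)
    · rintro _ ⟨c, rfl⟩
      rw [hΨ]
      exact Submodule.sum_mem_iSup fun i => Submodule.mem_map_of_mem (c i).2
    · rintro _ ⟨y, hy, rfl⟩
      refine ⟨Pi.single i ⟨y, hy⟩, ?_⟩
      rw [hΨ, Finset.sum_eq_single i (fun j _ hj => by simp [hj]) (by simp)]
      simp
  rw [← hrange, LinearMap.finrank_range_of_inj hinj, finrank_pi_fintype,
    Finset.sum_coe_sort s fun i => finrank K (p i)]

end Tensor

theorem finrank_RS (F : Type*) [Field F] [Fintype F] (k : ℤ) :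
    finrank F (RS F k) = min k.toNat (Fintype.card F) :=
  finrank_map_polyEval_degreeLT k.toNat

theorem finrank_CA (F : Type*) [Field F] [Fintype F] {e a b : ℕ} (ha : a < Fintype.card F)
    (hb : e * a ≤ b) :
    finrank F (CA F e a b) = ∑ d ∈ Finset.Iic a, min (b - e * d + 1) (Fintype.card F) := by
  have hpow : LinearIndepOn F (fun (d : ℕ) (α : F) => α ^ d) (Finset.Iic a : Set ℕ) :=
    linearIndepOn_pow_Iio_card.mono fun d hd => (Finset.mem_Iic.mp hd).trans_lt ha
  rw [CA, finrank_iSup_map_vTensor _ hpow]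
  refine Finset.sum_congr rfl fun d hd => ?_
  have hed : e * d ≤ b := (Nat.mul_le_mul_left e (Finset.mem_Iic.mp hd)).trans hb
  rw [finrank_RS]
  congr 2
  omega

/-- The paper's `s̃_A`; for `e > 0` the integer division is `⌊(b + 1 - q) / e⌋`. -/
def sTilde (q e a b : ℕ) : ℤ :=
  if (q : ℤ) ≤ (b : ℤ) + 1 then min (((b : ℤ) + 1 - q) / e) (a : ℤ) else -1

section sTilde

variable (q e a b : ℕ)

theorem neg_one_le_sTilde : -1 ≤ sTilde q e a b := by
  unfold sTilde
  split_ifs with h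
  · exact le_min (by linarith [Int.ediv_nonneg (by omega : 0 ≤ (b : ℤ) + 1 - q) e.cast_nonneg])
      (by omega)
  · rfl

theorem sTilde_le : sTilde q e a b ≤ a := by
  unfold sTilde
  split_ifs
  · exact min_le_right _ _
  · omega

/-- `RS_q(b - ed + 1)` is the whole space exactly for `d ≤ s̃_A`. -/
theorem le_sTilde_iff (he : 1 ≤ e) {d : ℕ} (hd : d ≤ a) :
    (d : ℤ) ≤ sTilde q e a b ↔ (q : ℤ) + e * d ≤ b + 1 := by
  unfold sTilde
  split_ifs with h
  · rw [le_min_iff, Int.le_ediv_iff_mul_le (by omega)]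
    constructor
    · rintro ⟨h1, -⟩; linarith
    · intro h1; exact ⟨by linarith, by omega⟩
  · constructor
    · intro h1; omega
    · intro h1; nlinarith

end sTilde

theorem sum_Ico_sub_mul {K : Type*} [Field K] [CharZero K] (x y : K) {n m : ℕ} (h : n ≤ m) :
    ∑ d ∈ Finset.Ico n m, (x - y * d) = (m - n) * (x - y * (n + m - 1) / 2) := by
  induction m, h using Nat.le_induction with
  | base => simp
  | succ m hnm ih =>
    rw [Finset.sum_Ico_succ_top hnm, ih]
    push_cast
    ring

theorem sum_min_card_eq {q e a b : ℕ} (he : 1 ≤ e) (hb : e * a ≤ b) :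
    ((∑ d ∈ Finset.Iic a, min (b - e * d + 1) q : ℕ) : ℚ) =
      ((sTilde q e a b : ℚ) + 1) * q +
        ((a : ℚ) - sTilde q e a b) * ((b : ℚ) + 1 - e * ((a : ℚ) + sTilde q e a b + 1) / 2) := by
  obtain ⟨n, hn⟩ : ∃ n : ℕ, (n : ℤ) = sTilde q e a b + 1 :=
    ⟨_, Int.toNat_of_nonneg (by linarith [neg_one_le_sTilde q e a b])⟩
  have hna : n ≤ a + 1 := by have := sTilde_le q e a b; omega
  have hed : ∀ d ≤ a, e * d ≤ b := fun d hd => (Nat.mul_le_mul_left e hd).trans hb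
  have hfirst : ∀ d ∈ Finset.range n, min (b - e * d + 1) q = q := fun d hd => by
    have hd := Finset.mem_range.mp hd
    have := (le_sTilde_iff q e a b he (by omega : d ≤ a)).mp (by omega)
    have := hed d (by omega)
    apply min_eq_right
    omega
  have hlast : ∀ d ∈ Finset.Ico n (a + 1),
      ((min (b - e * d + 1) q : ℕ) : ℚ) = ((b : ℚ) + 1) - e * d := fun d hd => by
    have hd := Finset.mem_Ico.mp hd
    have := (le_sTilde_iff q e a b he (by omega : d ≤ a)).not.mp (by omega)
    have := hed d (by omega)
    rw [min_eq_left (by omega), Nat.cast_add, Nat.cast_sub this]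
    push_cast
    ring
  rw [← Nat.range_succ_eq_Iic, ← Finset.sum_range_add_sum_Ico _ hna, Nat.cast_add,
    Finset.sum_congr rfl hfirst, Nat.cast_sum (Finset.Ico n (a + 1)), Finset.sum_congr rfl hlast,
    Finset.sum_const, Finset.card_range, nsmul_eq_mul, sum_Ico_sub_mul _ _ hna]
  have hn' : (n : ℚ) = sTilde q e a b + 1 := by exact_mod_cast hn
  push_cast
  rw [hn']
  ring

/-- the dimension of `C_{𝔸,e}(a,b)` for `e ≥ 1`, `0 ≤ a ≤ q-1`, `b - ea ≥ 0`:
`dim = (s̃_A + 1)q + (a - s̃_A)(b + 1 - e(a + s̃_A + 1)/2)` where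
`s̃_A = min{⌊(b+1-q)/e⌋, a}` if `b + 1 - q ≥ 0` and `s̃_A = -1` otherwise. -/
theorem CA_dim (F : Type*) [Field F] [Fintype F] (q e a b : ℕ) (sA : ℤ)
    (hq : Fintype.card F = q) (he : 1 ≤ e) (ha : a ≤ q - 1) (hb : e * a ≤ b)
    (hsA : sA = if (q : ℤ) ≤ (b : ℤ) + 1 then min (((b : ℤ) + 1 - q) / e) (a : ℤ) else -1) :
    (Module.finrank F (CA F e a b) : ℚ) =
      ((sA : ℚ) + 1) * q + ((a : ℚ) - sA) * ((b : ℚ) + 1 - e * ((a : ℚ) + sA + 1) / 2) := by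
  subst hq hsA
  have ha' : a < Fintype.card F := by
    have := Fintype.card_pos (α := F)
    omega
  rw [finrank_CA F ha' hb]
  exact sum_min_card_eq he hb
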